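/- Let ε ∈ (0,1), r ∈ (0,1], and y > 0. Then M_P((1 + rε)y/(1 + ε), y/(1 + ε)) > M_P((1 − ε − rε)y/(1 + ε), y/(1 − ε)). -/

import Mathlib

/-!
Write `s = rε`, `μ = y/(1+ε)` and `q = (1+ε)/(1-ε)`. On `z ≥ 0` the exponent is real-valued and
positively homogeneous of degree one in `(z, λ)`, so after dividing by `μ` the claim reads
`M_P(1-ε-s, q) < M_P(1+s, 1)`. Since `z ↦ M_P(z, λ)` increases on `[0, λ]`, the left side is at
most `M_P(1, q) = 1 - q + log(1+ε) - log(1-ε) ≤ -ε²/(1-ε) < -ε²`, while `log(1+s) ≤ s` gives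
`M_P(1+s, 1) ≥ -s² ≥ -ε²`.
-/

/-- Extended-real-valued Poisson exponent: `M_P(z, λ) = z − λ + z·ln(λ/z)` for
`z > 0`, `M_P(0, λ) = −λ`, and `M_P(z, λ) = −∞` for `z < 0`. -/
noncomputable def MPe (z lam : ℝ) : EReal :=
  if 0 < z then ((z - lam + z * Real.log (lam / z) : ℝ) : EReal)
  else if z = 0 then ((-lam : ℝ) : EReal)
  else ⊥

open Real Set

/-- At `z = 0` the junk value of `log (lam / 0)` is multiplied by `0`, so this agrees with `M_P`. -/
noncomputable def poissonExponent (z lam : ℝ) : ℝ := z - lam + z * log (lam / z)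

lemma MPe_of_nonneg {z : ℝ} (lam : ℝ) (hz : 0 ≤ z) : MPe z lam = poissonExponent z lam := by
  rcases hz.lt_or_eq with hz | rfl
  · simp [MPe, hz, poissonExponent]
  · simp [MPe, poissonExponent]

lemma MPe_of_neg {z : ℝ} (lam : ℝ) (hz : z < 0) : MPe z lam = ⊥ := by
  simp [MPe, hz.not_gt, hz.ne]

lemma poissonExponent_mul_mul (c z lam : ℝ) :
    poissonExponent (c * z) (c * lam) = c * poissonExponent z lam := by
  rcases eq_or_ne c 0 with rfl | hc
  · simp [poissonExponent]
  · rw [poissonExponent, poissonExponent, mul_div_mul_left _ _ hc]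
    ring

lemma poissonExponent_monotoneOn (lam : ℝ) :
    MonotoneOn (poissonExponent · lam) (Icc 0 lam) := by
  rintro z ⟨hz0, -⟩ w ⟨hw0, hwlam⟩ hzw
  have hw_log : 0 ≤ w * log (lam / w) := by
    rcases hw0.lt_or_eq with hw | rfl
    · exact mul_nonneg hw.le (log_nonneg ((one_le_div hw).2 hwlam))
    · simp
  simp only [poissonExponent]
  rcases hz0.lt_or_eq with hz | rfl
  · have hw : 0 < w := hz.trans_le hzw
    have hlam : 0 < lam := hw.trans_le hwlam
    have hsplit : log (lam / z) = log (lam / w) + log (w / z) := by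
      rw [← log_mul (by positivity) (by positivity), div_mul_div_cancel₀ hw.ne']
    have hwz : z * log (w / z) ≤ w - z := by
      have := mul_le_mul_of_nonneg_left (log_le_sub_one_of_pos (div_pos hw hz)) hz.le
      rwa [mul_sub, mul_div_cancel₀ _ hz.ne', mul_one] at this
    have hlog : 0 ≤ log (lam / w) := log_nonneg ((one_le_div hw).2 hwlam)
    rw [hsplit]
    nlinarith [mul_nonneg (sub_nonneg.2 hzw) hlog]
  · simp only [zero_mul, add_zero]
    linarith

lemma neg_sq_le_poissonExponent_one_add {s : ℝ} (hs : -1 < s) :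
    -s ^ 2 ≤ poissonExponent (1 + s) 1 := by
  have hpos : 0 < 1 + s := by linarith
  have hlog := mul_le_mul_of_nonneg_left (log_le_sub_one_of_pos hpos) hpos.le
  rw [poissonExponent, one_div, log_inv]
  nlinarith

lemma poissonExponent_one_le {ε : ℝ} (hε0 : -1 < ε) (hε1 : ε < 1) :
    poissonExponent 1 ((1 + ε) / (1 - ε)) ≤ -ε ^ 2 / (1 - ε) := by
  have hsub : 0 < 1 - ε := by linarith
  have hlog_add : log (1 + ε) ≤ ε := by
    linarith [log_le_sub_one_of_pos (show 0 < 1 + ε by linarith)]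
  have hlog_sub : 1 - (1 - ε)⁻¹ ≤ log (1 - ε) := one_sub_inv_le_log_of_pos hsub
  rw [poissonExponent, div_one, log_div (by linarith) hsub.ne', one_mul]
  have hbound : 1 - (1 + ε) / (1 - ε) + ε - (1 - (1 - ε)⁻¹) = -ε ^ 2 / (1 - ε) := by
    field_simp
    ring
  linarith

lemma poissonExponent_sub_lt_one_add {ε s : ℝ} (hε0 : 0 < ε) (hε1 : ε < 1) (hs0 : 0 ≤ s)
    (hsε : s ≤ ε) (hv : 0 ≤ 1 - ε - s) :
    poissonExponent (1 - ε - s) ((1 + ε) / (1 - ε)) < poissonExponent (1 + s) 1 := by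
  have hsub : 0 < 1 - ε := by linarith
  have hq : 1 ≤ (1 + ε) / (1 - ε) := (one_le_div hsub).2 (by linarith)
  calc poissonExponent (1 - ε - s) ((1 + ε) / (1 - ε))
      ≤ poissonExponent 1 ((1 + ε) / (1 - ε)) :=
        poissonExponent_monotoneOn _ ⟨hv, by linarith⟩ ⟨zero_le_one, hq⟩ (by linarith)
    _ ≤ -ε ^ 2 / (1 - ε) := poissonExponent_one_le (by linarith) hε1
    _ < -ε ^ 2 := by
        rw [div_lt_iff₀ hsub]
        nlinarith [pow_pos hε0 3]
    _ ≤ -s ^ 2 := by nlinarith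
    _ ≤ poissonExponent (1 + s) 1 := neg_sq_le_poissonExponent_one_add (by linarith)

theorem mp_rel_error_ineq (ε r y : ℝ) (hε0 : 0 < ε) (hε1 : ε < 1)
    (hr0 : 0 < r) (hr1 : r ≤ 1) (hy : 0 < y) :
    MPe ((1 - ε - r * ε) * y / (1 + ε)) (y / (1 - ε)) <
      MPe ((1 + r * ε) * y / (1 + ε)) (y / (1 + ε)) := by
  have hs0 : 0 ≤ r * ε := by positivity
  have hsε : r * ε ≤ ε := mul_le_of_le_one_left hε0.le hr1
  have hμ : 0 < y / (1 + ε) := by positivity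
  have hscale (a : ℝ) : a * y / (1 + ε) = y / (1 + ε) * a := by ring
  have hlam : y / (1 - ε) = y / (1 + ε) * ((1 + ε) / (1 - ε)) := by
    field_simp [show 1 - ε ≠ 0 by linarith]
  have hz : 0 ≤ y / (1 + ε) * (1 + r * ε) := by positivity
  rw [hscale, hscale, hlam, MPe_of_nonneg _ hz]
  rcases lt_or_ge (y / (1 + ε) * (1 - ε - r * ε)) 0 with hneg | hnonneg
  · rw [MPe_of_neg _ hneg]
    exact EReal.bot_lt_coe _
  rw [MPe_of_nonneg _ hnonneg, EReal.coe_lt_coe_iff, poissonExponent_mul_mul]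
  have hv : 0 ≤ 1 - ε - r * ε := nonneg_of_mul_nonneg_right hnonneg hμ
  have key := mul_lt_mul_of_pos_left (poissonExponent_sub_lt_one_add hε0 hε1 hs0 hsε hv) hμ
  rwa [← poissonExponent_mul_mul _ (1 + r * ε), mul_one] at key
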